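/- For a finite set S of integers containing the integer n₀ nearest to a real x (with |x - n₀| < |x - n| for all other n ∈ S), the normalized smooth rounding round_norm(x,k) = (Σ_{n∈S} n·ρ_n(x)) / (Σ_{n∈S} ρ_n(x)) converges to n₀ as k → ∞. -/

import Mathlib

noncomputable def sigma (z : ℝ) : ℝ := 1 / (1 + Real.exp (-z))

noncomputable def rho (n : ℤ) (k x : ℝ) : ℝ :=
  k * sigma (k * (x - (n : ℝ))) * (1 - sigma (k * (x - (n : ℝ))))

/-!
Since `σ(z)(1 - σ(z)) = 1 / (4 cosh² (z/2))`, the weight `ρ_n(x)` is `k / (4 cosh² (k(x - n)/2))`,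
and `cosh t` lies between `e^|t| / 2` and `e^|t|`. Hence `ρ_n(x) / ρ_{n₀}(x)` decays like
`e^{-k(|x - n| - |x - n₀|)}` for `n ≠ n₀`: after dividing numerator and denominator by `ρ_{n₀}(x)`,
all weights other than that of `n₀` vanish and the weighted average tends to `n₀`.
-/

open Filter Topology Real

theorem tendsto_sum_mul_div_sum_of_dominant {α ι 𝕜 : Type*} [Field 𝕜] [TopologicalSpace 𝕜]
    [IsTopologicalDivisionRing 𝕜] [DecidableEq ι] {l : Filter α} {S : Finset ι} {i₀ : ι}
    (hi₀ : i₀ ∈ S) (a : ι → 𝕜) (w : ι → α → 𝕜) (hw : ∀ᶠ k in l, w i₀ k ≠ 0)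
    (hratio : ∀ i ∈ S, i ≠ i₀ → Tendsto (fun k => w i k / w i₀ k) l (𝓝 0)) :
    Tendsto (fun k => (∑ i ∈ S, a i * w i k) / ∑ i ∈ S, w i k) l (𝓝 (a i₀)) := by
  have hlim : ∀ i ∈ S, Tendsto (fun k => w i k / w i₀ k) l (𝓝 (if i = i₀ then 1 else 0)) := by
    intro i hi
    by_cases hii₀ : i = i₀
    · subst hii₀
      simpa using tendsto_const_nhds.congr' (hw.mono fun k hk => (div_self hk).symm)
    · simpa [hii₀] using hratio i hi hii₀
  have hnum : Tendsto (fun k => ∑ i ∈ S, a i * (w i k / w i₀ k)) l (𝓝 (a i₀)) := by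
    simpa [mul_ite, hi₀] using tendsto_finsetSum S fun i hi => (hlim i hi).const_mul (a i)
  have hden : Tendsto (fun k => ∑ i ∈ S, w i k / w i₀ k) l (𝓝 1) := by
    simpa [hi₀] using tendsto_finsetSum S hlim
  have hquot : Tendsto (fun k => (∑ i ∈ S, a i * (w i k / w i₀ k)) / ∑ i ∈ S, w i k / w i₀ k) l
      (𝓝 (a i₀)) := by
    rw [← div_one (a i₀)]
    exact hnum.div hden one_ne_zero
  refine hquot.congr' (hw.mono fun k hk => ?_)
  simp only [← mul_div_assoc, ← Finset.sum_div, div_div_div_cancel_right₀ hk]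

theorem sigma_mul_one_sub_sigma (z : ℝ) : sigma z * (1 - sigma z) = (4 * cosh (z / 2) ^ 2)⁻¹ := by
  have hsplit : exp (-z) = exp (-(z / 2)) ^ 2 := by rw [← exp_nat_mul]; ring_nf
  have hinv : exp (z / 2) * exp (-(z / 2)) = 1 := by rw [← exp_add]; simp
  rw [sigma, cosh_eq, hsplit]
  field_simp
  linear_combination (4 * (exp (z / 2) * exp (-(z / 2)) + 2 * exp (-(z / 2)) ^ 2 + 1)) * hinv

theorem cosh_le_exp_abs (t : ℝ) : cosh t ≤ exp |t| := by
  rw [← cosh_abs, cosh_eq]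
  linarith [exp_le_exp.mpr (neg_le_self (abs_nonneg t))]

theorem exp_abs_le_two_mul_cosh (t : ℝ) : exp |t| ≤ 2 * cosh t := by
  rw [← cosh_abs, cosh_eq]
  linarith [exp_pos (-|t|)]

theorem tendsto_cosh_mul_div_cosh_mul {a b : ℝ} (hab : |a| < |b|) :
    Tendsto (fun k => cosh (k * a) / cosh (k * b)) atTop (𝓝 0) := by
  have hexp : Tendsto (fun k => 2 * exp (k * (|a| - |b|))) atTop (𝓝 0) := by
    simpa using ((tendsto_exp_atBot.comp
      (tendsto_id.atTop_mul_const_of_neg (sub_neg.mpr hab))).const_mul 2)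
  refine squeeze_zero' (Eventually.of_forall fun k => by positivity) ?_ hexp
  filter_upwards [eventually_ge_atTop 0] with k hk
  rw [div_le_iff₀ (cosh_pos _)]
  calc cosh (k * a) ≤ exp (k * |a|) := by
        simpa [abs_mul, abs_of_nonneg hk] using cosh_le_exp_abs (k * a)
    _ = exp (k * (|a| - |b|)) * exp (k * |b|) := by rw [← exp_add]; ring_nf
    _ ≤ exp (k * (|a| - |b|)) * (2 * cosh (k * b)) := by
        gcongr
        simpa [abs_mul, abs_of_nonneg hk] using exp_abs_le_two_mul_cosh (k * b)
    _ = 2 * exp (k * (|a| - |b|)) * cosh (k * b) := by ring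

theorem rho_eq (n : ℤ) (k x : ℝ) : rho n k x = k / (4 * cosh (k * ((x - n) / 2)) ^ 2) := by
  rw [rho, mul_assoc, sigma_mul_one_sub_sigma, mul_div_assoc, ← div_eq_mul_inv]

theorem rho_pos (n : ℤ) {k : ℝ} (hk : 0 < k) (x : ℝ) : 0 < rho n k x := by
  rw [rho_eq]
  positivity

theorem tendsto_rho_div_rho {n n₀ : ℤ} {x : ℝ} (h : |x - n₀| < |x - n|) :
    Tendsto (fun k => rho n k x / rho n₀ k x) atTop (𝓝 0) := by
  have hhalf : |(x - n₀) / 2| < |(x - n) / 2| := by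
    simpa [abs_div] using div_lt_div_of_pos_right h two_pos
  have hsq : Tendsto (fun k => (cosh (k * ((x - n₀) / 2)) / cosh (k * ((x - n) / 2))) ^ 2) atTop
      (𝓝 0) := by
    simpa using (tendsto_cosh_mul_div_cosh_mul hhalf).pow 2
  refine hsq.congr' (eventually_gt_atTop 0 |>.mono fun k hk => ?_)
  simp only [rho_eq, div_pow]
  field_simp

theorem round_norm_tendsto_general (S : Finset ℤ) (x : ℝ) (n₀ : ℤ) (hn₀ : n₀ ∈ S)
    (h : ∀ n ∈ S, n ≠ n₀ → |x - (n₀ : ℝ)| < |x - (n : ℝ)|) :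
    Filter.Tendsto
      (fun k : ℝ => (∑ n ∈ S, (n : ℝ) * rho n k x) / (∑ n ∈ S, rho n k x))
      Filter.atTop (nhds (n₀ : ℝ)) :=
  tendsto_sum_mul_div_sum_of_dominant hn₀ (fun n => (n : ℝ)) (fun n k => rho n k x)
    ((eventually_gt_atTop 0).mono fun _ hk => (rho_pos n₀ hk x).ne')
    fun n hn hne => tendsto_rho_div_rho (h n hn hne)

theorem round_norm_tendsto (S : Finset ℤ) (hS : S.Nonempty) (x : ℝ) (n₀ : ℤ) (hn₀ : n₀ ∈ S)
    (h : ∀ n ∈ S, n ≠ n₀ → |x - (n₀ : ℝ)| < |x - (n : ℝ)|) :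
    Filter.Tendsto
      (fun k : ℝ => (∑ n ∈ S, (n : ℝ) * rho n k x) / (∑ n ∈ S, rho n k x))
      Filter.atTop (nhds (n₀ : ℝ)) :=
  round_norm_tendsto_general S x n₀ hn₀ h
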